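/- arXiv:dg-ga/9507005 — 2 statements merged into one kernel-verified Lean document; each statement's English description precedes it below -/
import Mathlib

section
/- Let N be a nonzero integer, let f : ℝ² → ℂ be a smooth doubly periodic function, and let φ : ℝ² → ℂ be a smooth N-quasi-periodic function. Then 𝒬_N(f)φ is again N-quasi-periodic; i.e., the prequantization operators act on the space of smooth sections of the prequantum line bundle L_N over the torus. -/
noncomputable section

/-- Partial derivative in the first variable. -/
def pdx (φ : ℝ × ℝ → ℂ) (p : ℝ × ℝ) : ℂ := fderiv ℝ φ p (1, 0)

/-- Partial derivative in the second variable. -/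
def pdy (φ : ℝ × ℝ → ℂ) (p : ℝ × ℝ) : ℂ := fderiv ℝ φ p (0, 1)

/-- The prequantization map `𝒬_N` of the torus, acting on functions on `ℝ²`. -/
def Q (N : ℤ) (f : ℝ × ℝ → ℂ) (φ : ℝ × ℝ → ℂ) : ℝ × ℝ → ℂ := fun p =>
  (1 / (2 * (Real.pi : ℂ) * Complex.I * (N : ℂ))) *
      (pdx f p * (pdy φ p - 2 * (Real.pi : ℂ) * Complex.I * (N : ℂ) * (p.1 : ℂ) * φ p) -
        pdy f p * pdx φ p) +
    f p * φ p

/-- A function on `ℝ²` is doubly periodic: identified with an element of `C^∞(T²)`. -/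
def DoublyPeriodic (f : ℝ × ℝ → ℂ) : Prop :=
  ∀ (m n : ℤ) (x y : ℝ), f (x + m, y + n) = f (x, y)

/-- `N`-quasi-periodicity: identified with sections of the prequantum bundle `L_N`. -/
def QuasiPeriodic (N : ℤ) (φ : ℝ × ℝ → ℂ) : Prop :=
  ∀ (m n : ℤ) (x y : ℝ),
    φ (x + m, y + n) =
      Complex.exp (2 * (Real.pi : ℂ) * Complex.I * (N : ℂ) * (m : ℂ) * (y : ℂ)) * φ (x, y)

lemma fderiv_shift (g : ℝ × ℝ → ℂ) (hg : Differentiable ℝ g) (v p : ℝ × ℝ) :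
    fderiv ℝ (fun q => g (q + v)) p = fderiv ℝ g (p + v) := by
  have h1 : HasFDerivAt (fun q : ℝ × ℝ => q + v) (ContinuousLinearMap.id ℝ (ℝ × ℝ)) p :=
    (hasFDerivAt_id p).add_const v
  have h2 : HasFDerivAt g (fderiv ℝ g (p + v)) (p + v) := (hg (p + v)).hasFDerivAt
  have h3 := h2.comp p h1
  simpa [Function.comp_def] using h3.fderiv

lemma fderiv_exp_mul (φ : ℝ × ℝ → ℂ) (hφ : Differentiable ℝ φ) (c : ℂ) (p : ℝ × ℝ) (w : ℝ × ℝ) :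
    fderiv ℝ (fun q : ℝ × ℝ => Complex.exp (c * (q.2 : ℂ)) * φ q) p w
      = Complex.exp (c * (p.2 : ℂ)) * (c * (w.2 : ℂ)) * φ p
        + Complex.exp (c * (p.2 : ℂ)) * fderiv ℝ φ p w := by
  have hu : HasFDerivAt (fun q : ℝ × ℝ => c * (q.2 : ℂ))
      (c • (Complex.ofRealCLM.comp (ContinuousLinearMap.snd ℝ ℝ ℝ))) p :=
    ((Complex.ofRealCLM.comp (ContinuousLinearMap.snd ℝ ℝ ℝ)).hasFDerivAt).const_mul c
  have hm := (hu.cexp).mul (hφ p).hasFDerivAt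
  rw [(show HasFDerivAt (fun q : ℝ × ℝ => Complex.exp (c * (q.2 : ℂ)) * φ q) _ p from hm).fderiv]
  simp [ContinuousLinearMap.smul_apply, smul_eq_mul]
  ring

/-- The prequantization operators preserve the space of sections of `L_N`. -/
theorem prequantization_preserves_sections (N : ℤ) (hN : N ≠ 0)
    (f : ℝ × ℝ → ℂ) (hf : ContDiff ℝ (⊤ : ℕ∞) f) (hfper : DoublyPeriodic f)
    (φ : ℝ × ℝ → ℂ) (hφ : ContDiff ℝ (⊤ : ℕ∞) φ) (hφqp : QuasiPeriodic N φ) :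
    QuasiPeriodic N (Q N f φ) := by
  have hfd : Differentiable ℝ f := hf.differentiable (by simp)
  have hφd : Differentiable ℝ φ := hφ.differentiable (by simp)
  intro m n x y
  set K : ℂ := 2 * (Real.pi : ℂ) * Complex.I * (N : ℂ) with hK
  set c : ℂ := K * (m : ℂ) with hc
  set v : ℝ × ℝ := ((m : ℝ), (n : ℝ)) with hv
  have hpt : ((x + (m : ℝ), y + (n : ℝ)) : ℝ × ℝ) = (x, y) + v := rfl
  -- f is translation invariant
  have hfe : (fun q : ℝ × ℝ => f (q + v)) = f := by
    funext q
    exact hfper m n q.1 q.2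
  have hff : fderiv ℝ f ((x, y) + v) = fderiv ℝ f (x, y) := by
    rw [← fderiv_shift f hfd v (x, y), hfe]
  -- φ translation
  have hφe : (fun q : ℝ × ℝ => φ (q + v)) =
      fun q : ℝ × ℝ => Complex.exp (c * (q.2 : ℂ)) * φ q := by
    funext q
    have := hφqp m n q.1 q.2
    simpa [hc, hK, mul_assoc, hv, Prod.add_def] using this
  have hφf : ∀ w : ℝ × ℝ, fderiv ℝ φ ((x, y) + v) w
      = Complex.exp (c * (y : ℂ)) * (c * (w.2 : ℂ)) * φ (x, y)
        + Complex.exp (c * (y : ℂ)) * fderiv ℝ φ (x, y) w := by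
    intro w
    rw [← fderiv_shift φ hφd v (x, y), hφe]
    exact fderiv_exp_mul φ hφd c (x, y) w
  have hexp : Complex.exp (2 * (Real.pi : ℂ) * Complex.I * (N : ℂ) * (m : ℂ) * (y : ℂ))
      = Complex.exp (c * (y : ℂ)) := by rw [hc, hK]
  have hf2 : f ((x, y) + v) = f (x, y) := hfper m n x y
  have hp2 : φ ((x, y) + v) = Complex.exp (c * (y : ℂ)) * φ (x, y) := by
    rw [← hexp]; exact hφqp m n x y
  simp only [Q, pdx, pdy, hexp, hpt, hff, hφf, hf2, hp2]
  push_cast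
  rw [hc]
  ring
end
end

section
/- Let T be a bounded linear operator on L²(ℝ, ℂ) such that for all Schwartz functions ψ, χ ∈ 𝒮(ℝ, ℂ): ⟨T(ψ₁), χ⟩ = ⟨Tψ, χ₁⟩ where ψ₁(x) = x²ψ(x), χ₁(x) = x²χ(x), and ⟨T(ψ''), χ⟩ = ⟨Tψ, χ''⟩. Then T also weakly commutes with the operator S = 4x·(d/dx) + 2, in the sense that ⟨T(Sψ), χ⟩ = −⟨Tψ, Sχ⟩ for all ψ, χ ∈ 𝒮(ℝ, ℂ), where (Sψ)(x) = 4x·ψ'(x) + 2ψ(x). -/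
/-!
On Schwartz space, `S = 4x·d/dx + 2` is the commutator `[d²/dx², x²]`. The form
`B(u, w) = ⟨T u, w⟩` is real-bilinear, and the two hypotheses say that `x²` and `d²/dx²` are
self-adjoint for it. The commutator of two self-adjoint operators is skew-adjoint, which is the
claim.
-/

open MeasureTheory SchwartzMap

noncomputable section

theorem LinearMap.IsSelfAdjoint.isSkewAdjoint_commutator {R M M₂ : Type*} [CommRing R]
    [AddCommGroup M] [Module R M] [AddCommGroup M₂] [Module R M₂] {B : M →ₗ[R] M →ₗ[R] M₂}
    {f g : M → M} (hf : B.IsSelfAdjoint f) (hg : B.IsSelfAdjoint g) :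
    B.IsSkewAdjoint (g ∘ f - f ∘ g) := by
  rw [LinearMap.IsSkewAdjoint, neg_sub]
  exact (hf.comp hg).sub (hg.comp hf)

theorem deriv_deriv_sq_mul_sub {f : ℝ → ℂ} (hf : Differentiable ℝ f)
    (hf' : Differentiable ℝ (deriv f)) (x : ℝ) :
    deriv (deriv fun y : ℝ => (y : ℂ) ^ 2 * f y) x - (x : ℂ) ^ 2 * deriv (deriv f) x
      = 4 * x * deriv f x + 2 * f x := by
  have hsq (y : ℝ) : HasDerivAt (fun y : ℝ => (y : ℂ) ^ 2) (2 * y) y := by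
    simpa [mul_comm] using (hasDerivAt_pow 2 (y : ℂ)).comp_ofReal
  have hlin : HasDerivAt (fun y : ℝ => 2 * (y : ℂ)) 2 x := by
    simpa using ((hasDerivAt_id (x : ℂ)).const_mul 2).comp_ofReal
  have h1 : deriv (fun y : ℝ => (y : ℂ) ^ 2 * f y)
      = fun y => 2 * y * f y + (y : ℂ) ^ 2 * deriv f y :=
    funext fun y => ((hsq y).mul (hf y).hasDerivAt).deriv
  have h2 : HasDerivAt (fun y : ℝ => 2 * y * f y + (y : ℂ) ^ 2 * deriv f y)
      (2 * f x + 2 * x * deriv f x + (2 * x * deriv f x + x ^ 2 * deriv (deriv f) x)) x :=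
    (hlin.mul (hf x).hasDerivAt).add ((hsq x).mul (hf' x).hasDerivAt)
  rw [h1, h2.deriv]
  ring

namespace Metaplectic

def mulSq : 𝓢(ℝ, ℂ) →L[ℝ] 𝓢(ℝ, ℂ) := smulLeftCLM ℂ fun x : ℝ => x ^ 2

theorem coe_mulSq (f : 𝓢(ℝ, ℂ)) : ⇑(mulSq f) = fun x : ℝ => (x : ℂ) ^ 2 * f x := by
  ext x
  simp [mulSq, smulLeftCLM_apply_apply (by fun_prop : (fun x : ℝ => x ^ 2).HasTemperateGrowth),
    Complex.real_smul]

def deriv2 : 𝓢(ℝ, ℂ) →L[ℝ] 𝓢(ℝ, ℂ) := (derivCLM ℝ ℂ).comp (derivCLM ℝ ℂ)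

theorem coe_deriv2 (f : 𝓢(ℝ, ℂ)) : ⇑(deriv2 f) = deriv (deriv f) := rfl

theorem coe_commutator_deriv2_mulSq (f : 𝓢(ℝ, ℂ)) :
    ⇑((⇑deriv2 ∘ ⇑mulSq - ⇑mulSq ∘ ⇑deriv2) f)
      = fun x : ℝ => 4 * (x : ℂ) * deriv f x + 2 * f x := by
  ext x
  rw [Pi.sub_apply, Function.comp_apply, Function.comp_apply, sub_apply, coe_deriv2,
    coe_mulSq, coe_mulSq, coe_deriv2]
  exact deriv_deriv_sq_mul_sub f.differentiable (derivCLM ℝ ℂ f).differentiable x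

-- Stated with the `Lp` type of the theorem: unifying it with the type of `SchwartzMap.toLp`
-- (a different path to the measurable space on `ℝ`) is expensive, so it is done once here.
def toL2 : 𝓢(ℝ, ℂ) →L[ℝ] Lp ℂ 2 (volume : Measure ℝ) := toLpCLM ℝ ℂ 2 volume

theorem coeFn_toL2 (f : 𝓢(ℝ, ℂ)) : ⇑(toL2 f) =ᵐ[volume] ⇑f := coeFn_toLp f 2 volume

theorem eq_toL2_of_ae_eq {g : Lp ℂ 2 (volume : Measure ℝ)} {f : 𝓢(ℝ, ℂ)}
    (h : ⇑g =ᵐ[volume] ⇑f) : g = toL2 f :=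
  Lp.ext (h.trans (coeFn_toL2 f).symm)

-- `⟨T u, w⟩` is conjugate-linear in `u` over `ℂ`, hence bilinear only over `ℝ`.
def weakPairing (T : Lp ℂ 2 (volume : Measure ℝ) →L[ℂ] Lp ℂ 2 (volume : Measure ℝ)) :
    𝓢(ℝ, ℂ) →ₗ[ℝ] 𝓢(ℝ, ℂ) →ₗ[ℝ] ℂ :=
  LinearMap.mk₂ ℝ (fun u w => inner ℂ (T (toL2 u)) (toL2 w))
    (fun u v w => by simp only [map_add, inner_add_left])
    (fun c u w => by
      rw [map_smul, T.map_smul_of_tower, RCLike.real_smul_eq_coe_smul (K := ℂ),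
        inner_smul_real_left])
    (fun u v w => by simp only [map_add, inner_add_right])
    (fun c u w => by
      rw [map_smul, RCLike.real_smul_eq_coe_smul (K := ℂ), inner_smul_real_right])

theorem weakPairing_apply (T : Lp ℂ 2 (volume : Measure ℝ) →L[ℂ] Lp ℂ 2 (volume : Measure ℝ))
    (u w : 𝓢(ℝ, ℂ)) : weakPairing T u w = inner ℂ (T (toL2 u)) (toL2 w) :=
  rfl

end Metaplectic

open Metaplectic

/-- A bounded operator on `L²(ℝ, ℂ)` weakly commuting with multiplication by `x²`
and with `d²/dx²` also weakly commutes (up to the sign coming from formal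
skew-adjointness) with their commutator `S = [d²/dx², x²] = 4x·d/dx + 2`. The
hypotheses and conclusion quantify over `L²` representatives of the relevant
Schwartz-class functions. -/
theorem commutes_with_metaplectic_generator
    (T : Lp ℂ 2 (volume : Measure ℝ) →L[ℂ] Lp ℂ 2 (volume : Measure ℝ))
    (hx2 : ∀ (ψ χ : SchwartzMap ℝ ℂ) (Fψ Fψ₁ Fχ Fχ₁ : Lp ℂ 2 (volume : Measure ℝ)),
      ⇑Fψ =ᵐ[volume] ⇑ψ → ⇑Fψ₁ =ᵐ[volume] (fun x : ℝ => (x : ℂ) ^ 2 * ψ x) →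
      ⇑Fχ =ᵐ[volume] ⇑χ → ⇑Fχ₁ =ᵐ[volume] (fun x : ℝ => (x : ℂ) ^ 2 * χ x) →
      (inner ℂ (T Fψ₁) Fχ : ℂ) = inner ℂ (T Fψ) Fχ₁)
    (hdd : ∀ (ψ χ : SchwartzMap ℝ ℂ) (Fψ Fψ'' Fχ Fχ'' : Lp ℂ 2 (volume : Measure ℝ)),
      ⇑Fψ =ᵐ[volume] ⇑ψ → ⇑Fψ'' =ᵐ[volume] deriv (deriv ⇑ψ) →
      ⇑Fχ =ᵐ[volume] ⇑χ → ⇑Fχ'' =ᵐ[volume] deriv (deriv ⇑χ) →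
      (inner ℂ (T Fψ'') Fχ : ℂ) = inner ℂ (T Fψ) Fχ'') :
    ∀ (ψ χ : SchwartzMap ℝ ℂ) (Fψ FSψ Fχ FSχ : Lp ℂ 2 (volume : Measure ℝ)),
      ⇑Fψ =ᵐ[volume] ⇑ψ →
      ⇑FSψ =ᵐ[volume] (fun x : ℝ => 4 * (x : ℂ) * deriv (⇑ψ) x + 2 * ψ x) →
      ⇑Fχ =ᵐ[volume] ⇑χ →
      ⇑FSχ =ᵐ[volume] (fun x : ℝ => 4 * (x : ℂ) * deriv (⇑χ) x + 2 * χ x) →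
      (inner ℂ (T FSψ) Fχ : ℂ) = -(inner ℂ (T Fψ) FSχ : ℂ) := by
  intro ψ χ Fψ FSψ Fχ FSχ hψ hSψ hχ hSχ
  have hX : (weakPairing T).IsSelfAdjoint mulSq := fun u w =>
    hx2 u w _ _ _ _ (coeFn_toL2 u) ((coeFn_toL2 _).trans (coe_mulSq u).eventuallyEq)
      (coeFn_toL2 w) ((coeFn_toL2 _).trans (coe_mulSq w).eventuallyEq)
  have hD : (weakPairing T).IsSelfAdjoint deriv2 := fun u w =>
    hdd u w _ _ _ _ (coeFn_toL2 u) (coeFn_toL2 _) (coeFn_toL2 w) (coeFn_toL2 _)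
  obtain rfl := eq_toL2_of_ae_eq hψ
  obtain rfl := eq_toL2_of_ae_eq hχ
  obtain rfl := eq_toL2_of_ae_eq <|
    hSψ.trans (coe_commutator_deriv2_mulSq ψ).symm.eventuallyEq
  obtain rfl := eq_toL2_of_ae_eq <|
    hSχ.trans (coe_commutator_deriv2_mulSq χ).symm.eventuallyEq
  simpa only [weakPairing_apply, Pi.neg_apply, map_neg] using
    hX.isSkewAdjoint_commutator hD ψ χ
end
end
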